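/- Let K be an infinite field and let M be a matroid on a finite ground set E that is representable over K, with rank at least 1. Then the truncation T(M) of M is also representable over K. -/

import Mathlib

universe u

/-- A matroid presented as a finite ground set together with a rank function
satisfying the rank axioms (R1), (R2), (R3). -/
structure RankMatroid (α : Type) [DecidableEq α] where
  E : Finset α
  r : Finset α → ℕ
  r_le_card : ∀ X ⊆ E, r X ≤ X.card
  r_mono : ∀ X Y : Finset α, X ⊆ Y → Y ⊆ E → r X ≤ r Y
  r_submod : ∀ X Y : Finset α, X ⊆ E → Y ⊆ E →
    r (X ∪ Y) + r (X ∩ Y) ≤ r X + r Y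

namespace RankMatroid

variable {α : Type} [DecidableEq α]

/-- A set is independent if its rank equals its cardinality. -/
def Indep (M : RankMatroid α) (X : Finset α) : Prop :=
  X ⊆ M.E ∧ M.r X = X.card

/-- A base is a maximal independent set. -/
def Base (M : RankMatroid α) (B : Finset α) : Prop :=
  M.Indep B ∧ M.r B = M.r M.E

/-- A dependent set. -/
def Dep (M : RankMatroid α) (X : Finset α) : Prop :=
  X ⊆ M.E ∧ M.r X ≠ X.card

/-- A circuit is a minimal dependent set. -/
def Circuit (M : RankMatroid α) (C : Finset α) : Prop :=
  M.Dep C ∧ ∀ X ⊂ C, M.Indep X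

/-- A spanning set. -/
def Spanning (M : RankMatroid α) (X : Finset α) : Prop :=
  X ⊆ M.E ∧ M.r X = M.r M.E

/-- A flat. -/
def Flat (M : RankMatroid α) (X : Finset α) : Prop :=
  X ⊆ M.E ∧ ∀ e ∈ M.E, e ∉ X → M.r X < M.r (insert e X)

/-- A hyperplane is a flat of rank `r(E) - 1`. -/
def Hyperplane (M : RankMatroid α) (X : Finset α) : Prop :=
  M.Flat X ∧ M.r X + 1 = M.r M.E

/-- `M` is representable over the field `F`: there is a map from the ground type to
an `F`-vector space under which the rank of every subset of the ground set equals the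
dimension of the span of its image. -/
def RepOver (M : RankMatroid α) (F : Type u) [Field F] : Prop :=
  ∃ (V : Type u) (_ : AddCommGroup V) (_ : Module F V) (φ : α → V),
    ∀ X ⊆ M.E, M.r X = Module.finrank F (Submodule.span F (φ '' (X : Set α)))

/-- `M` is representable if it is representable over at least one field. -/
def Representable (M : RankMatroid α) : Prop :=
  ∃ (F : Type) (_ : Field F), M.RepOver F

end RankMatroid

/-!
Let `φ` represent `M` in `V` and let `W` be the span of `φ(E)`, of dimension `r(E) ≥ 1`. For
each `X ⊆ E` of rank `< r(E)` the span of `φ(X)` is a proper subspace of `W`; as `K` is infinite,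
`W` is not a finite union of proper subspaces, so some `w ∈ W` lies in none of them. Projecting
`V` onto `V ⧸ K ∙ w` leaves the dimension of the span of a set of rank `< r(E)` unchanged and
lowers that of a spanning set by one, since `w` is then a nonzero vector of the span. The
resulting rank function is `min (r X) (r(E) - 1)`, the rank function of the truncation.
-/

namespace RankMatroid

variable {α : Type} [DecidableEq α] (M : RankMatroid α)

lemma r_empty : M.r ∅ = 0 :=
  Nat.le_zero.mp (by simpa using M.r_le_card ∅ (Finset.empty_subset _))

lemma r_insert_le {X : Finset α} {e : α} (h : insert e X ⊆ M.E) :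
    M.r (insert e X) ≤ M.r X + 1 := by
  have he : {e} ⊆ M.E := by simpa using Finset.insert_subset_iff.mp h |>.1
  have hsub := M.r_submod {e} X he ((Finset.subset_insert e X).trans h)
  have hcard : M.r {e} ≤ 1 := by simpa using M.r_le_card {e} he
  rw [← Finset.insert_eq] at hsub
  omega

variable {M}

lemma Indep.subset {X Y : Finset α} (hX : M.Indep X) (hYX : Y ⊆ X) : M.Indep Y := by
  have hYE : Y ⊆ M.E := hYX.trans hX.1
  have hsub := M.r_submod Y (X \ Y) hYE (Finset.sdiff_subset.trans hX.1)
  rw [Finset.union_sdiff_of_subset hYX, Finset.inter_sdiff_self, M.r_empty, hX.2] at hsub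
  have hdiff : M.r (X \ Y) ≤ X.card - Y.card := by
    simpa [Finset.card_sdiff_of_subset hYX] using
      M.r_le_card (X \ Y) (Finset.sdiff_subset.trans hX.1)
  have hY := M.r_le_card Y hYE
  have hcard := Finset.card_le_card hYX
  exact ⟨hYE, by omega⟩

lemma Indep.insert_of_r_lt {I X : Finset α} {e : α} (hI : M.Indep I) (hIX : I ⊆ X)
    (hIcard : I.card = M.r X) (he : e ∉ X) (hXE : insert e X ⊆ M.E)
    (hlt : M.r X < M.r (insert e X)) : M.Indep (insert e I) := by
  have heI : e ∉ I := fun h => he (hIX h)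
  have hIE : insert e I ⊆ M.E := (Finset.insert_subset_insert e hIX).trans hXE
  have hsub := M.r_submod (insert e I) X hIE ((Finset.subset_insert e X).trans hXE)
  rw [Finset.insert_union, Finset.union_eq_right.mpr hIX, Finset.insert_inter_of_notMem he,
    Finset.inter_eq_left.mpr hIX, hI.2] at hsub
  have hle := M.r_le_card _ hIE
  rw [Finset.card_insert_of_notMem heI] at hle
  exact ⟨hIE, by rw [Finset.card_insert_of_notMem heI]; omega⟩

variable (M)

lemma exists_indep_subset_card_eq_r {X : Finset α} (hX : X ⊆ M.E) :
    ∃ I ⊆ X, M.Indep I ∧ I.card = M.r X := by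
  induction X using Finset.induction_on with
  | empty => exact ⟨∅, subset_rfl, ⟨Finset.empty_subset _, by simp [r_empty]⟩, by simp [r_empty]⟩
  | @insert e X he ih =>
    have hXE : X ⊆ M.E := (Finset.subset_insert e X).trans hX
    obtain ⟨I, hIX, hI, hIcard⟩ := ih hXE
    have hle := M.r_mono X (insert e X) (Finset.subset_insert e X) hX
    have hge := M.r_insert_le hX
    rcases hle.eq_or_lt with heq | hlt
    · exact ⟨I, hIX.trans (Finset.subset_insert e X), hI, hIcard.trans heq⟩
    · refine ⟨insert e I, Finset.insert_subset_insert e hIX,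
        hI.insert_of_r_lt hIX hIcard he hX hlt, ?_⟩
      rw [Finset.card_insert_of_notMem fun h => he (hIX h)]
      omega

variable {M}

lemma r_eq_min_of_indep_iff {T : RankMatroid α} {k : ℕ} (hTE : T.E = M.E)
    (hTI : ∀ X : Finset α, T.Indep X ↔ (M.Indep X ∧ X.card ≤ k))
    {X : Finset α} (hX : X ⊆ M.E) : T.r X = min (M.r X) k := by
  have hXT : X ⊆ T.E := hTE ▸ hX
  apply le_antisymm
  · obtain ⟨I, hIX, hI, hIcard⟩ := T.exists_indep_subset_card_eq_r hXT
    obtain ⟨hMI, hIk⟩ := (hTI I).mp hI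
    have := M.r_mono I X hIX hX
    have := hMI.2
    omega
  · obtain ⟨I, hIX, hI, hIcard⟩ := M.exists_indep_subset_card_eq_r hX
    obtain ⟨J, hJI, hJcard⟩ := Finset.exists_subset_card_eq (s := I) (n := min (M.r X) k)
      (by omega)
    have hTJ : T.Indep J := (hTI J).mpr ⟨hI.subset hJI, by omega⟩
    have := T.r_mono J X (hJI.trans hIX) hXT
    have := hTJ.2
    omega

end RankMatroid

section LinearAlgebra

open Module Submodule

variable {K V : Type*} [Field K] [AddCommGroup V] [Module K V]

lemma Submodule.exists_mem_forall_notMem_of_not_le [Infinite K] {ι : Type*} (s : Finset ι)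
    (W : Submodule K V) (p : ι → Submodule K V) (h : ∀ i ∈ s, ¬ W ≤ p i) :
    ∃ w ∈ W, ∀ i ∈ s, w ∉ p i := by
  by_contra! hcover
  let q : s → Subspace K W := fun i => (p i).comap W.subtype
  have hq : ⋃ i, (q i : Set W) = Set.univ :=
    Set.eq_univ_of_forall fun w => by
      obtain ⟨i, hi, hw⟩ := hcover w w.2
      exact Set.mem_iUnion.mpr ⟨⟨i, hi⟩, hw⟩
  obtain ⟨⟨i, hi⟩, htop⟩ := Subspace.exists_eq_top_of_iUnion_eq_univ hq
  exact h i hi fun w hw => (htop ▸ trivial : (⟨w, hw⟩ : W) ∈ q ⟨i, hi⟩)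

instance FiniteDimensional.span_image_finset {ι : Type*} (φ : ι → V) (X : Finset ι) :
    FiniteDimensional K (span K (φ '' (X : Set ι))) :=
  .span_of_finite K (X.finite_toSet.image φ)

lemma Submodule.finrank_map_mkQ_add_finrank_comap (L U : Submodule K V) [FiniteDimensional K U] :
    finrank K (U.map L.mkQ) + finrank K (L.comap U.subtype) = finrank K U := by
  have h := LinearMap.finrank_range_add_finrank_ker (L.mkQ.domRestrict U)
  rwa [LinearMap.range_domRestrict, LinearMap.ker_domRestrict, ker_mkQ] at h

lemma Submodule.finrank_map_mkQ_span_singleton_of_notMem {U : Submodule K V}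
    [FiniteDimensional K U] {w : V} (hw : w ∉ U) :
    finrank K (U.map (K ∙ w).mkQ) = finrank K U := by
  have h := finrank_map_mkQ_add_finrank_comap (K ∙ w) U
  rwa [disjoint_iff_comap_eq_bot.mp (disjoint_span_singleton.mpr fun h => absurd h hw),
    finrank_bot, add_zero] at h

lemma Submodule.finrank_map_mkQ_span_singleton_add_one {U : Submodule K V}
    [FiniteDimensional K U] {w : V} (hw : w ∈ U) (hw0 : w ≠ 0) :
    finrank K (U.map (K ∙ w).mkQ) + 1 = finrank K U := by
  have h := finrank_map_mkQ_add_finrank_comap (K ∙ w) U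
  rwa [LinearEquiv.finrank_eq (comapSubtypeEquivOfLe ((span_singleton_le_iff_mem w U).mpr hw)),
    finrank_span_singleton hw0] at h

end LinearAlgebra

section Representation

open Module Submodule

variable {α : Type} [DecidableEq α] {K V : Type*} [Field K] [AddCommGroup V] [Module K V]

def RankMatroid.IsRep (M : RankMatroid α) (K : Type*) [Field K] [Module K V] (φ : α → V) :
    Prop :=
  ∀ X ⊆ M.E, M.r X = finrank K (span K (φ '' (X : Set α)))

namespace RankMatroid.IsRep

variable {M : RankMatroid α} {φ : α → V}

lemma exists_generic_vector [Infinite K] (hφ : M.IsRep K φ) :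
    ∃ w ∈ span K (φ '' (M.E : Set α)),
      ∀ X ⊆ M.E, M.r X < M.r M.E → w ∉ span K (φ '' (X : Set α)) := by
  obtain ⟨w, hwE, hw⟩ := exists_mem_forall_notMem_of_not_le
    (M.E.powerset.filter fun X => M.r X < M.r M.E) (span K (φ '' (M.E : Set α)))
    (fun X => span K (φ '' (X : Set α))) fun X hX hle => by
      rw [Finset.mem_filter, Finset.mem_powerset] at hX
      have := finrank_mono hle
      rw [← hφ X hX.1, ← hφ M.E subset_rfl] at this
      omega
  exact ⟨w, hwE, fun X hX hlt => hw X (by simp [hX, hlt])⟩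

lemma finrank_span_image_mkQ (hφ : M.IsRep K φ) (hr : 1 ≤ M.r M.E) {w : V}
    (hwE : w ∈ span K (φ '' (M.E : Set α)))
    (hw : ∀ X ⊆ M.E, M.r X < M.r M.E → w ∉ span K (φ '' (X : Set α)))
    {X : Finset α} (hX : X ⊆ M.E) :
    finrank K (span K ((fun a => (K ∙ w).mkQ (φ a)) '' (X : Set α))) =
      min (M.r X) (M.r M.E - 1) := by
  rw [← Set.image_image (K ∙ w).mkQ φ, ← map_span]
  rcases (M.r_mono X M.E hX subset_rfl).lt_or_eq with hlt | heq
  · rw [finrank_map_mkQ_span_singleton_of_notMem (hw X hX hlt), ← hφ X hX]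
    omega
  · have hspan : span K (φ '' (X : Set α)) = span K (φ '' (M.E : Set α)) := by
      refine eq_of_le_of_finrank_le (span_mono (Set.image_mono hX)) ?_
      rw [← hφ X hX, ← hφ M.E subset_rfl, heq]
    have hw0 : w ≠ 0 := by
      rintro rfl
      exact hw ∅ (Finset.empty_subset _) (by rw [r_empty]; omega) (zero_mem _)
    have := finrank_map_mkQ_span_singleton_add_one (hspan ▸ hwE) hw0
    rw [← hφ X hX] at this
    omega

end RankMatroid.IsRep

end Representation

/-- The truncation of a matroid that is representable over an infinite field `K` is again
representable over `K`.  Here the truncation `T` is specified by its independent sets: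
the independent sets of `M` of cardinality at most `r(E) - 1`. -/
theorem truncation_representable {α : Type} [DecidableEq α]
    (K : Type u) [Field K] (hK : Infinite K)
    (M : RankMatroid α) (hM : M.RepOver K) (hr : 1 ≤ M.r M.E)
    (T : RankMatroid α) (hTE : T.E = M.E)
    (hTI : ∀ X : Finset α, T.Indep X ↔ (M.Indep X ∧ X.card ≤ M.r M.E - 1)) :
    T.RepOver K := by
  obtain ⟨V, _, _, φ, hφ⟩ := hM
  obtain ⟨w, hwE, hw⟩ := RankMatroid.IsRep.exists_generic_vector hφ
  refine ⟨V ⧸ K ∙ w, inferInstance, inferInstance, fun a => (K ∙ w).mkQ (φ a), fun X hX => ?_⟩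
  rw [hTE] at hX
  rw [RankMatroid.r_eq_min_of_indep_iff hTE hTI hX,
    RankMatroid.IsRep.finrank_span_image_mkQ hφ hr hwE hw hX]
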